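/- Let (X, d, ≪, ≤, τ) and (Y, d̃, ≪̃, ≤̃, τ̃) be Lorentzian length spaces such that X is strongly causal and the metric space (Y, d̃) is locally compact, and let f : X → Y be a surjective distance homothetic map. Then f is a homeomorphism (with respect to the metric topologies) and Y is strongly causal. -/

import Mathlib

open scoped NNReal ENNReal
open Set Filter Topology

/-- A Lorentzian pre-length space: a causal space `(X, ≪, ≤)` carried by a metric space `X`,
together with a time separation function `τ : X × X → [0, ∞]`. -/
structure LorentzianPreLengthSpace (X : Type*) [MetricSpace X] where
  /-- The chronological relation `≪`. -/
  chron : X → X → Prop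
  /-- The causal relation `≤`. -/
  causal : X → X → Prop
  chron_trans : ∀ {x y z : X}, chron x y → chron y z → chron x z
  causal_refl : ∀ x : X, causal x x
  causal_trans : ∀ {x y z : X}, causal x y → causal y z → causal x z
  chron_imp_causal : ∀ {x y : X}, chron x y → causal x y
  /-- The time separation function `τ`. -/
  tau : X → X → ℝ≥0∞
  tau_lsc : LowerSemicontinuous fun p : X × X => tau p.1 p.2
  tau_rev_triangle : ∀ {x y z : X}, causal x y → causal y z → tau x y + tau y z ≤ tau x z
  tau_eq_zero : ∀ {x y : X}, ¬ causal x y → tau x y = 0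
  tau_pos_iff : ∀ {x y : X}, 0 < tau x y ↔ chron x y

namespace LorentzianPreLengthSpace

variable {X : Type*} [MetricSpace X] (L : LorentzianPreLengthSpace X)

/-- Chronological future `I⁺(x)`. -/
def Iplus (x : X) : Set X := {y | L.chron x y}

/-- Chronological past `I⁻(x)`. -/
def Iminus (x : X) : Set X := {y | L.chron y x}

/-- Causal future `J⁺(x)`. -/
def Jplus (x : X) : Set X := {y | L.causal x y}

/-- Causal past `J⁻(x)`. -/
def Jminus (x : X) : Set X := {y | L.causal y x}

/-- A future directed causal curve on `[a,b]`: non-constant, Lipschitz, and order preserving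
from the order of `[a,b]` to the causal relation. -/
def IsFutureCausalCurve (γ : ℝ → X) (a b : ℝ) : Prop :=
  a < b ∧ (∃ K : ℝ≥0, LipschitzOnWith K γ (Icc a b)) ∧
    (∃ s ∈ Icc a b, ∃ t ∈ Icc a b, γ s ≠ γ t) ∧
    ∀ ⦃s⦄, s ∈ Icc a b → ∀ ⦃t⦄, t ∈ Icc a b → s < t → L.causal (γ s) (γ t)

/-- A future directed timelike curve on `[a,b]`. -/
def IsFutureTimelikeCurve (γ : ℝ → X) (a b : ℝ) : Prop :=
  a < b ∧ (∃ K : ℝ≥0, LipschitzOnWith K γ (Icc a b)) ∧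
    (∃ s ∈ Icc a b, ∃ t ∈ Icc a b, γ s ≠ γ t) ∧
    ∀ ⦃s⦄, s ∈ Icc a b → ∀ ⦃t⦄, t ∈ Icc a b → s < t → L.chron (γ s) (γ t)

/-- The `τ`-length of a curve: the infimum over all partitions
`a = t₀ < t₁ < ⋯ < t_N = b` (with `N ≥ 1`) of `∑ τ(γ(tᵢ), γ(tᵢ₊₁))`. -/
noncomputable def tauLength (γ : ℝ → X) (a b : ℝ) : ℝ≥0∞ :=
  ⨅ n : ℕ, ⨅ t : {t : Fin (n + 2) → ℝ // StrictMono t ∧ t 0 = a ∧ t (Fin.last (n + 1)) = b},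
    ∑ i : Fin (n + 1), L.tau (γ (t.1 i.castSucc)) (γ (t.1 i.succ))

/-- Causal path connectedness: causally related (distinct) points are joined by a future
directed causal curve, chronologically related points by a future directed timelike curve. -/
def CausallyPathConnected : Prop :=
  (∀ x y : X, L.causal x y → x ≠ y →
      ∃ γ : ℝ → X, ∃ a b : ℝ, L.IsFutureCausalCurve γ a b ∧ γ a = x ∧ γ b = y) ∧
  (∀ x y : X, L.chron x y →
      ∃ γ : ℝ → X, ∃ a b : ℝ, L.IsFutureTimelikeCurve γ a b ∧ γ a = x ∧ γ b = y)

/-- `p ≤_U q`: there is a future directed causal curve from `p` to `q` with image in `U`. -/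
def CausalInside (U : Set X) (p q : X) : Prop :=
  ∃ γ : ℝ → X, ∃ a b : ℝ, L.IsFutureCausalCurve γ a b ∧ γ a = p ∧ γ b = q ∧ γ '' Icc a b ⊆ U

/-- `U` is causally closed: the relation `≤_U` is closed under limits inside `U`. -/
def CausallyClosedNbhd (U : Set X) : Prop :=
  ∀ (p q : X) (pn qn : ℕ → X), (∀ n, L.CausalInside U (pn n) (qn n)) →
    Tendsto pn atTop (𝓝 p) → Tendsto qn atTop (𝓝 q) → p ∈ U → q ∈ U → L.CausalInside U p q

/-- Every point has a causally closed open neighborhood. -/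
def LocallyCausallyClosed : Prop :=
  ∀ x : X, ∃ U : Set X, IsOpen U ∧ x ∈ U ∧ L.CausallyClosedNbhd U

/-- Localizability: every point has a localizing open neighborhood `Ω`. -/
def Localizable : Prop :=
  ∀ x : X, ∃ Ω : Set X, IsOpen Ω ∧ x ∈ Ω ∧
    (∃ C : ℝ≥0, ∀ (γ : ℝ → X) (a b : ℝ), L.IsFutureCausalCurve γ a b →
        γ '' Icc a b ⊆ Ω → eVariationOn γ (Icc a b) ≤ C) ∧
    ∃ ω : X → X → ℝ≥0∞,
      ContinuousOn (fun pq : X × X => ω pq.1 pq.2) (Ω ×ˢ Ω) ∧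
      (∀ p ∈ Ω, ∀ q ∈ Ω, ω p q ≠ ⊤) ∧
      (∀ p ∈ Ω, ∀ q ∈ Ω, ∀ r ∈ Ω, L.causal p q → L.causal q r → ω p q + ω q r ≤ ω p r) ∧
      (∀ p ∈ Ω, ∀ q ∈ Ω, ¬ L.causal p q → ω p q = 0) ∧
      (∀ p ∈ Ω, ∀ q ∈ Ω, (0 < ω p q ↔ L.chron p q)) ∧
      (∀ y ∈ Ω, (L.Iplus y ∩ Ω).Nonempty ∧ (L.Iminus y ∩ Ω).Nonempty) ∧
      (∀ p ∈ Ω, ∀ q ∈ Ω, L.causal p q → p ≠ q →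
        ∃ γ : ℝ → X, ∃ a b : ℝ, L.IsFutureCausalCurve γ a b ∧ γ a = p ∧ γ b = q ∧
          γ '' Icc a b ⊆ Ω ∧ L.tauLength γ a b = ω p q ∧
          ∀ (σ : ℝ → X) (c e : ℝ), L.IsFutureCausalCurve σ c e → σ c = p → σ e = q →
            σ '' Icc c e ⊆ Ω → L.tauLength σ c e ≤ L.tauLength γ a b)

/-- `L` is a Lorentzian length space: causally path connected, locally causally closed,
localizable, and `τ` is the supremum of `τ`-lengths of connecting causal curves
(the supremum of the empty set being `0`). -/
def IsLengthSpace : Prop :=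
  L.CausallyPathConnected ∧ L.LocallyCausallyClosed ∧ L.Localizable ∧
    ∀ x y : X, L.tau x y = sSup {ℓ : ℝ≥0∞ | ∃ γ : ℝ → X, ∃ a b : ℝ,
      L.IsFutureCausalCurve γ a b ∧ γ a = x ∧ γ b = y ∧ ℓ = L.tauLength γ a b}

/-- `K⁺`: the smallest closed and transitive relation containing `J⁺`. -/
def Kplus : Set (X × X) :=
  ⋂₀ {R : Set (X × X) | IsClosed R ∧ (∀ a b c : X, (a, b) ∈ R → (b, c) ∈ R → (a, c) ∈ R) ∧
      {pq : X × X | L.causal pq.1 pq.2} ⊆ R}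

/-- The Alexandrov topology, generated by the chronological diamonds. -/
def AlexandrovTopology : TopologicalSpace X :=
  TopologicalSpace.generateFrom {s : Set X | ∃ x y : X, s = L.Iplus x ∩ L.Iminus y}

/-- Strong causality: the Alexandrov topology coincides with the metric topology. -/
def StronglyCausal : Prop :=
  L.AlexandrovTopology = (inferInstance : TopologicalSpace X)

/-- Non-total imprisonment: causal curves in a compact set have uniformly bounded
`d`-arclength. -/
def NonTotallyImprisoning : Prop :=
  ∀ K : Set X, IsCompact K → ∃ C : ℝ≥0, ∀ (γ : ℝ → X) (a b : ℝ),
    L.IsFutureCausalCurve γ a b → γ '' Icc a b ⊆ K → eVariationOn γ (Icc a b) ≤ C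

/-- Global hyperbolicity. -/
def GloballyHyperbolic : Prop :=
  L.NonTotallyImprisoning ∧ ∀ x y : X, IsCompact (L.Jplus x ∩ L.Jminus y)

/-- Causality: the causal relation is antisymmetric. -/
def Causal : Prop := ∀ x y : X, L.causal x y → L.causal y x → x = y

/-- Causal simplicity. -/
def CausallySimple : Prop :=
  L.Causal ∧ ∀ x : X, IsClosed (L.Jplus x) ∧ IsClosed (L.Jminus x)

/-- Distinguishing. -/
def Distinguishing : Prop :=
  (∀ x y : X, L.Iplus x = L.Iplus y → x = y) ∧ (∀ x y : X, L.Iminus x = L.Iminus y → x = y)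

/-- Reflectivity. -/
def Reflective : Prop :=
  (∀ x y : X, L.Iplus x ⊆ L.Iplus y → L.Iminus y ⊆ L.Iminus x) ∧
  (∀ x y : X, L.Iminus y ⊆ L.Iminus x → L.Iplus x ⊆ L.Iplus y)

/-- Causal continuity. -/
def CausallyContinuous : Prop := L.Distinguishing ∧ L.Reflective

/-- Stable causality: `K⁺` is antisymmetric. -/
def StablyCausal : Prop := ∀ x y : X, (x, y) ∈ L.Kplus → (y, x) ∈ L.Kplus → x = y

end LorentzianPreLengthSpace

/-- A distance homothetic map: `τ̃(f p, f q) = c · τ(p, q)` for some constant `c > 0`. -/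
def DistanceHomothetic {X Y : Type*} [MetricSpace X] [MetricSpace Y]
    (LX : LorentzianPreLengthSpace X) (LY : LorentzianPreLengthSpace Y) (f : X → Y) : Prop :=
  ∃ c : ℝ≥0, 0 < c ∧ ∀ p q : X, LY.tau (f p) (f q) = (c : ℝ≥0∞) * LX.tau p q

/-- A locally causally Lipschitz map. -/
def LocallyCausallyLipschitz {X Y : Type*} [MetricSpace X] [MetricSpace Y]
    (LX : LorentzianPreLengthSpace X) (f : X → Y) : Prop :=
  ∀ x : X, ∃ U : Set X, IsOpen U ∧ x ∈ U ∧ ∃ M : ℝ, 0 < M ∧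
    ∀ x1 ∈ U, ∀ x2 ∈ U, LX.causal x1 x2 → dist (f x1) (f x2) ≤ M * dist x1 x2

/-! Distance homothety gives `τ̃ (f p) (f q) = c τ p q` with `c > 0`, so `f` preserves `≪` in both
directions. In the strongly causal space `X` the chronological pasts and futures separate points,
so `f` is injective, and `f` carries the Alexandrov topology of `X`, which is its metric topology,
onto the Alexandrov topology of `Y`. The latter is always coarser than the metric topology, which
gives continuity of `f⁻¹`, and once `f` is a homeomorphism it gives strong causality of `Y`.

Continuity of `f` at `x` is the real point. If points arbitrarily close to `x` were sent at least
`ε` away from `f x`, choose `r < ε` with compact `closedBall (f x) r`. Any neighbourhood of `x`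
contains a chronologically convex one `N`; pick `a ≪ f x ≪ b` with `f⁻¹ a, f⁻¹ b ∈ N` and
`d(a, f x) < r`. A far point `f x'` with `x'` in the diamond of `f⁻¹ a, f⁻¹ b` is reached from `a`
by a timelike curve, which meets the sphere of radius `r` at a point `z` with `f⁻¹ z ∈ N`. Hence
`x` lies in the closure of the `f⁻¹`-image of that compact sphere, i.e. in the image itself,
which is absurd since `f x` is not on the sphere. -/

lemma DistanceHomothetic.chron_iff {X Y : Type*} [MetricSpace X] [MetricSpace Y]
    {LX : LorentzianPreLengthSpace X} {LY : LorentzianPreLengthSpace Y} {f : X → Y}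
    (hf : DistanceHomothetic LX LY f) (p q : X) :
    LX.chron p q ↔ LY.chron (f p) (f q) := by
  obtain ⟨c, hc, hτ⟩ := hf
  rw [← LX.tau_pos_iff, ← LY.tau_pos_iff, hτ, ENNReal.mul_pos_iff]
  simp [hc]

namespace LorentzianPreLengthSpace

variable {X : Type*} [MetricSpace X] (L : LorentzianPreLengthSpace X)

@[simp]
lemma mem_Iplus {x y : X} : y ∈ L.Iplus x ↔ L.chron x y := Iff.rfl

@[simp]
lemma mem_Iminus {x y : X} : y ∈ L.Iminus x ↔ L.chron y x := Iff.rfl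

lemma isOpen_Iplus (x : X) : IsOpen (L.Iplus x) := by
  have : L.Iplus x = (fun y => (x, y)) ⁻¹' ((fun p : X × X => L.tau p.1 p.2) ⁻¹' Ioi 0) := by
    ext y; exact L.tau_pos_iff.symm
  rw [this]
  exact (L.tau_lsc.isOpen_preimage 0).preimage (Continuous.prodMk_right x)

lemma isOpen_Iminus (x : X) : IsOpen (L.Iminus x) := by
  have : L.Iminus x = (fun y => (y, x)) ⁻¹' ((fun p : X × X => L.tau p.1 p.2) ⁻¹' Ioi 0) := by
    ext y; exact L.tau_pos_iff.symm
  rw [this]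
  exact (L.tau_lsc.isOpen_preimage 0).preimage (Continuous.prodMk_left x)

lemma le_alexandrovTopology : (inferInstance : TopologicalSpace X) ≤ L.AlexandrovTopology := by
  refine le_generateFrom ?_
  rintro _ ⟨a, b, rfl⟩
  exact (L.isOpen_Iplus a).inter (L.isOpen_Iminus b)

variable {L}

lemma IsFutureTimelikeCurve.continuousOn {γ : ℝ → X} {a b : ℝ}
    (hγ : L.IsFutureTimelikeCurve γ a b) : ContinuousOn γ (Icc a b) :=
  hγ.2.1.choose_spec.continuousOn

lemma IsFutureTimelikeCurve.chron {γ : ℝ → X} {a b : ℝ} (hγ : L.IsFutureTimelikeCurve γ a b)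
    {s t : ℝ} (hs : s ∈ Icc a b) (ht : t ∈ Icc a b) (hst : s < t) : L.chron (γ s) (γ t) :=
  hγ.2.2.2 hs ht hst

lemma Localizable.nonempty_Iplus (hL : L.Localizable) (y : X) : (L.Iplus y).Nonempty := by
  obtain ⟨Ω, -, hyΩ, -, ω, -, -, -, -, -, hI, -⟩ := hL y
  exact (hI y hyΩ).1.mono inter_subset_left

lemma Localizable.nonempty_Iminus (hL : L.Localizable) (y : X) : (L.Iminus y).Nonempty := by
  obtain ⟨Ω, -, hyΩ, -, ω, -, -, -, -, -, hI, -⟩ := hL y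
  exact (hI y hyΩ).2.mono inter_subset_left

lemma CausallyPathConnected.mem_closure_Iminus (hL : L.CausallyPathConnected) {y : X}
    (hy : (L.Iminus y).Nonempty) : y ∈ closure (L.Iminus y) := by
  obtain ⟨a, ha⟩ := hy
  obtain ⟨γ, s, t, hγ, -, rfl⟩ := hL.2 a y ha
  have hst : s < t := hγ.1
  have hcont : ContinuousWithinAt γ (Ico s t) t :=
    (hγ.continuousOn.continuousWithinAt (right_mem_Icc.mpr hst.le)).mono Ico_subset_Icc_self
  refine hcont.mem_closure (by rw [closure_Ico hst.ne]; exact right_mem_Icc.mpr hst.le) ?_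
  exact fun u hu => hγ.chron (Ico_subset_Icc_self hu) (right_mem_Icc.mpr hst.le) hu.2

lemma CausallyPathConnected.mem_closure_Iplus (hL : L.CausallyPathConnected) {y : X}
    (hy : (L.Iplus y).Nonempty) : y ∈ closure (L.Iplus y) := by
  obtain ⟨b, hb⟩ := hy
  obtain ⟨γ, s, t, hγ, rfl, -⟩ := hL.2 y b hb
  have hst : s < t := hγ.1
  have hcont : ContinuousWithinAt γ (Ioc s t) s :=
    (hγ.continuousOn.continuousWithinAt (left_mem_Icc.mpr hst.le)).mono Ioc_subset_Icc_self
  refine hcont.mem_closure (by rw [closure_Ioc hst.ne]; exact left_mem_Icc.mpr hst.le) ?_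
  exact fun u hu => hγ.chron (left_mem_Icc.mpr hst.le) (Ioc_subset_Icc_self hu) hu.1

lemma CausallyPathConnected.exists_chron_chron_dist_eq (hL : L.CausallyPathConnected)
    {a b y : X} {r : ℝ} (hab : L.chron a b) (ha : dist a y < r) (hb : r < dist b y) :
    ∃ z, L.chron a z ∧ L.chron z b ∧ dist z y = r := by
  obtain ⟨γ, s, t, hγ, rfl, rfl⟩ := hL.2 a b hab
  have hst : s < t := hγ.1
  have hdist : ContinuousOn (fun u => dist (γ u) y) (Icc s t) :=
    continuous_dist.comp_continuousOn (hγ.continuousOn.prodMk continuousOn_const)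
  obtain ⟨u, hu, hur⟩ := intermediate_value_Icc hst.le hdist ⟨ha.le, hb.le⟩
  have hsu : s < u := hu.1.lt_of_ne (by rintro rfl; exact ha.ne hur)
  have hut : u < t := hu.2.lt_of_ne (by rintro rfl; exact hb.ne' hur)
  exact ⟨γ u, hγ.chron (left_mem_Icc.mpr hst.le) hu hsu,
    hγ.chron hu (right_mem_Icc.mpr hst.le) hut, hur⟩

lemma StronglyCausal.eq_of_chron_iff (hL : L.StronglyCausal) {p q : X}
    (hpast : ∀ a, L.chron a p ↔ L.chron a q) (hfut : ∀ b, L.chron p b ↔ L.chron q b) :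
    p = q := by
  have hnhds : @nhds X L.AlexandrovTopology p = @nhds X L.AlexandrovTopology q := by
    unfold AlexandrovTopology
    rw [TopologicalSpace.nhds_generateFrom, TopologicalSpace.nhds_generateFrom]
    congr! 3 with s
    refine and_congr_left fun hs => ?_
    obtain ⟨a, b, rfl⟩ := hs
    exact and_congr (hpast a) (hfut b)
  rw [hL] at hnhds
  exact Inseparable.eq hnhds

/-- Finite intersections of chronological diamonds are chronologically convex. -/
lemma StronglyCausal.exists_chronConvex_mem_nhds (hL : L.StronglyCausal) {x : X} {V : Set X}
    (hV : V ∈ 𝓝 x) :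
    ∃ N ∈ 𝓝 x, N ⊆ V ∧ ∀ p ∈ N, ∀ q ∈ N, L.Iplus p ∩ L.Iminus q ⊆ N := by
  obtain ⟨_, ⟨T, ⟨hTfin, hTdiam⟩, rfl⟩, hxT, hTV⟩ :=
    (TopologicalSpace.isTopologicalBasis_of_subbasis hL.symm).mem_nhds_iff.mp hV
  have hTopen : IsOpen (⋂₀ T) := hTfin.isOpen_sInter fun u hu => by
    obtain ⟨a, b, rfl⟩ := hTdiam hu
    exact (L.isOpen_Iplus a).inter (L.isOpen_Iminus b)
  refine ⟨⋂₀ T, hTopen.mem_nhds hxT, hTV, fun p hp q hq z ⟨hpz, hzq⟩ => ?_⟩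
  intro u hu
  obtain ⟨a, b, rfl⟩ := hTdiam hu
  exact ⟨L.chron_trans (hp _ hu).1 hpz, L.chron_trans hzq (hq _ hu).2⟩

section ChronologicalIsomorphism

variable {Y : Type*} [MetricSpace Y]
  {LX : LorentzianPreLengthSpace X} {LY : LorentzianPreLengthSpace Y}

lemma StronglyCausal.injective_of_chron_iff (hX : LX.StronglyCausal)
    {f : X → Y} (hf : ∀ p q, LX.chron p q ↔ LY.chron (f p) (f q)) : Function.Injective f :=
  fun p q hpq => hX.eq_of_chron_iff (fun a => by rw [hf, hf, hpq])
    (fun b => by rw [hf, hf, hpq])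

lemma chron_symm_iff {e : X ≃ Y} (he : ∀ p q, LX.chron p q ↔ LY.chron (e p) (e q)) (a b : Y) :
    LX.chron (e.symm a) (e.symm b) ↔ LY.chron a b := by
  simpa using he (e.symm a) (e.symm b)

lemma preimage_symm_diamond {e : X ≃ Y} (he : ∀ p q, LX.chron p q ↔ LY.chron (e p) (e q))
    (a b : X) :
    e.symm ⁻¹' (LX.Iplus a ∩ LX.Iminus b) = LY.Iplus (e a) ∩ LY.Iminus (e b) := by
  ext y
  simp only [mem_preimage, mem_inter_iff, mem_Iplus, mem_Iminus]
  rw [he, he, e.apply_symm_apply]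

lemma alexandrovTopology_eq_induced_symm {e : X ≃ Y}
    (he : ∀ p q, LX.chron p q ↔ LY.chron (e p) (e q)) :
    LY.AlexandrovTopology = LX.AlexandrovTopology.induced e.symm := by
  rw [AlexandrovTopology, AlexandrovTopology, induced_generateFrom_eq]
  congr 1
  ext s
  constructor
  · rintro ⟨a, b, rfl⟩
    refine ⟨LX.Iplus (e.symm a) ∩ LX.Iminus (e.symm b), ⟨_, _, rfl⟩, ?_⟩
    simp [preimage_symm_diamond he]
  · rintro ⟨_, ⟨a, b, rfl⟩, rfl⟩
    exact ⟨e a, e b, preimage_symm_diamond he a b⟩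

lemma continuous_symm_of_chron_iff (hX : LX.StronglyCausal) {e : X ≃ Y}
    (he : ∀ p q, LX.chron p q ↔ LY.chron (e p) (e q)) : Continuous e.symm := by
  rw [continuous_iff_le_induced]
  calc _ ≤ LY.AlexandrovTopology := LY.le_alexandrovTopology
    _ = _ := by rw [alexandrovTopology_eq_induced_symm he, hX]

lemma StronglyCausal.of_homeomorph (hX : LX.StronglyCausal)
    (h : X ≃ₜ Y) (hh : ∀ p q, LX.chron p q ↔ LY.chron (h p) (h q)) : LY.StronglyCausal := by
  rw [StronglyCausal, alexandrovTopology_eq_induced_symm (e := h.toEquiv) hh, hX]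
  exact h.symm.induced_eq

lemma mem_closure_symm_image_sphere (hX : LX.StronglyCausal) (hY : LY.CausallyPathConnected)
    {e : X ≃ Y} (he : ∀ p q, LX.chron p q ↔ LY.chron (e p) (e q)) (hcont : Continuous e.symm)
    {x : X} (hpast : (LY.Iminus (e x)).Nonempty) (hfut : (LY.Iplus (e x)).Nonempty)
    {r : ℝ} (hr : 0 < r) (hfar : ∃ᶠ x' in 𝓝 x, r < dist (e x') (e x)) :
    x ∈ closure (e.symm '' Metric.sphere (e x) r) := by
  rw [mem_closure_iff_nhds]
  intro V hV
  obtain ⟨N, hN, hNV, hNconv⟩ := hX.exists_chronConvex_mem_nhds hV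
  have hNy : e.symm ⁻¹' N ∈ 𝓝 (e x) :=
    hcont.continuousAt.preimage_mem_nhds (by rwa [e.symm_apply_apply])
  obtain ⟨a, ⟨haN, hax⟩, hxa⟩ := mem_closure_iff_nhds.mp (hY.mem_closure_Iminus hpast) _
    (inter_mem hNy (Metric.ball_mem_nhds _ hr))
  obtain ⟨b, hbN, hxb⟩ := mem_closure_iff_nhds.mp (hY.mem_closure_Iplus hfut) _ hNy
  have hD : LX.Iplus (e.symm a) ∩ LX.Iminus (e.symm b) ∈ 𝓝 x := by
    refine ((LX.isOpen_Iplus _).inter (LX.isOpen_Iminus _)).mem_nhds ⟨?_, ?_⟩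
    · simpa using (chron_symm_iff he a (e x)).mpr hxa
    · simpa using (chron_symm_iff he (e x) b).mpr hxb
  obtain ⟨x', hx'far, hax', hx'b⟩ := (hfar.and_eventually hD).exists
  obtain ⟨z, haz, hzx', hz⟩ := hY.exists_chron_chron_dist_eq
    ((chron_symm_iff he a (e x')).mp (by simpa using hax')) (Metric.mem_ball.mp hax) hx'far
  have hzb : LY.chron z b :=
    LY.chron_trans hzx' ((chron_symm_iff he (e x') b).mp (by simpa using hx'b))
  refine ⟨e.symm z, hNV (hNconv _ haN _ hbN ⟨?_, ?_⟩), z, hz, rfl⟩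
  · exact (chron_symm_iff he a z).mpr haz
  · exact (chron_symm_iff he z b).mpr hzb

lemma continuous_of_chron_iff [LocallyCompactSpace Y] (hX : LX.StronglyCausal)
    (hY : LY.CausallyPathConnected) (hpast : ∀ y, (LY.Iminus y).Nonempty)
    (hfut : ∀ y, (LY.Iplus y).Nonempty) {e : X ≃ Y}
    (he : ∀ p q, LX.chron p q ↔ LY.chron (e p) (e q)) (hcont : Continuous e.symm) :
    Continuous e := by
  refine continuous_iff_continuousAt.mpr fun x => by_contra fun hdisc => ?_
  obtain ⟨ε, hε, hfar⟩ : ∃ ε > 0, ∃ᶠ x' in 𝓝 x, ε ≤ dist (e x') (e x) := by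
    simpa [Metric.continuousAt_iff', Filter.not_eventually] using hdisc
  obtain ⟨r, hK, hr, hrε⟩ : ∃ r, IsCompact (Metric.closedBall (e x) r) ∧ 0 < r ∧ r < ε :=
    ((eventually_nhdsWithin_of_eventually_nhds
      (Metric.eventually_isCompact_closedBall (e x))).and (Ioo_mem_nhdsGT hε)).exists
  have hS : IsCompact (Metric.sphere (e x) r) :=
    hK.of_isClosed_subset Metric.isClosed_sphere Metric.sphere_subset_closedBall
  have hx := mem_closure_symm_image_sphere hX hY he hcont (hpast (e x)) (hfut (e x)) hr
    (hfar.mono fun x' h => hrε.trans_le h)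
  rw [(hS.image hcont).isClosed.closure_eq] at hx
  obtain ⟨z, hz, hzx⟩ := hx
  rw [e.symm_apply_eq] at hzx
  subst hzx
  simp [hr.ne] at hz

end ChronologicalIsomorphism

end LorentzianPreLengthSpace

theorem distanceHomothetic_homeomorph_stronglyCausal_general {X Y : Type*}
    [MetricSpace X] [MetricSpace Y] [LocallyCompactSpace Y]
    (LX : LorentzianPreLengthSpace X) (LY : LorentzianPreLengthSpace Y)
    (hY : LY.IsLengthSpace) (hXsc : LX.StronglyCausal)
    (f : X → Y) (hsurj : Function.Surjective f) (hhom : DistanceHomothetic LX LY f) :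
    (∃ h : X ≃ₜ Y, ⇑h = f) ∧ LY.StronglyCausal := by
  let e : X ≃ Y := Equiv.ofBijective f ⟨hXsc.injective_of_chron_iff hhom.chron_iff, hsurj⟩
  have he : ∀ p q, LX.chron p q ↔ LY.chron (e p) (e q) := hhom.chron_iff
  have hsymm : Continuous e.symm :=
    LorentzianPreLengthSpace.continuous_symm_of_chron_iff hXsc he
  let h : X ≃ₜ Y :=
    { e with
      continuous_toFun := LorentzianPreLengthSpace.continuous_of_chron_iff hXsc hY.1
        hY.2.2.1.nonempty_Iminus hY.2.2.1.nonempty_Iplus he hsymm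
      continuous_invFun := hsymm }
  exact ⟨⟨h, rfl⟩, hXsc.of_homeomorph h he⟩

/-- if `X` is a strongly causal Lorentzian length space, `Y` a Lorentzian
length space with locally compact metric, and `f : X → Y` a surjective distance homothetic
map, then `f` is a homeomorphism and `Y` is strongly causal. -/
theorem distanceHomothetic_homeomorph_stronglyCausal {X Y : Type*}
    [MetricSpace X] [MetricSpace Y] [LocallyCompactSpace Y]
    (LX : LorentzianPreLengthSpace X) (LY : LorentzianPreLengthSpace Y)
    (hX : LX.IsLengthSpace) (hY : LY.IsLengthSpace) (hXsc : LX.StronglyCausal)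
    (f : X → Y) (hsurj : Function.Surjective f) (hhom : DistanceHomothetic LX LY f) :
    (∃ h : X ≃ₜ Y, ⇑h = f) ∧ LY.StronglyCausal :=
  distanceHomothetic_homeomorph_stronglyCausal_general LX LY hY hXsc f hsurj hhom
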